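/- arXiv:2301.13075 — 5 statements merged into one kernel-verified Lean document; each statement's English description precedes it below -/
import Mathlib

section
/- Let H be a complex Hilbert space, T > 0, and let Ĥ, V̂ : ℝ → (H →L[ℂ] H) be continuous families of bounded self-adjoint operators. Let ψ, φ : ℝ → H be differentiable with ψ'(t) = -i·Ĥ(t)(ψ(t)) and φ'(t) = -i·(Ĥ(t) + V̂(t))(φ(t)) for all t ∈ [0,T], and suppose ψ(0) = φ(0) with ‖ψ(0)‖ = 1. Then ‖ψ(T) - φ(T)‖ ≤ ∫₀^T ‖V̂(t)‖ dt, where ‖V̂(t)‖ denotes the operator norm. -/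
/-!
Since `Ĥ` is self-adjoint, `Re ⟪x, -i Ĥ x⟫ = 0`, so along either evolution the derivative of
the squared norm vanishes and `‖φ(t)‖ ≤ ‖φ(0)‖ = 1`. The difference `δ = ψ - φ` solves
`δ' = -i Ĥ δ + i V̂ φ`, whence `Re ⟪δ, δ'⟫ = Re ⟪δ, i V̂ φ⟫ ≤ ‖δ‖ ‖V̂‖`: the norm of `δ` grows at
rate at most `‖V̂(t)‖`, and `δ(0) = 0`.
-/

open Set Complex
open scoped RealInnerProductSpace

section RealInnerProductSpace

variable {E : Type*} [NormedAddCommGroup E] [InnerProductSpace ℝ E]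

theorem hasDerivWithinAt_sqrt_norm_sq_add_sq {u : ℝ → E} {u' : E} {s : Set ℝ} {t ε : ℝ}
    (hu : HasDerivWithinAt u u' s t) (hε : ε ≠ 0) :
    HasDerivWithinAt (fun τ ↦ √(‖u τ‖ ^ 2 + ε ^ 2)) (⟪u t, u'⟫ / √(‖u t‖ ^ 2 + ε ^ 2)) s t := by
  have hpos : 0 < ‖u t‖ ^ 2 + ε ^ 2 := by positivity
  convert (hu.norm_sq.add_const (ε ^ 2)).sqrt hpos.ne' using 1
  ring

theorem norm_le_add_integral_of_inner_deriv_le {u u' : ℝ → E} {g : ℝ → ℝ} {a b : ℝ}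
    (hab : a ≤ b) (hu : ContinuousOn u (Icc a b))
    (hu' : ∀ t ∈ Ico a b, HasDerivWithinAt u (u' t) (Ici t) t)
    (hg : Continuous g) (hg_nonneg : ∀ t ∈ Ico a b, 0 ≤ g t)
    (hbound : ∀ t ∈ Ico a b, ⟪u t, u' t⟫ ≤ ‖u t‖ * g t) :
    ‖u b‖ ≤ ‖u a‖ + ∫ t in a..b, g t := by
  refine le_of_forall_pos_le_add fun ε hε ↦ ?_
  -- `‖u‖` need not be differentiable where `u` vanishes, so compare its smoothing instead.
  set f := fun τ ↦ √(‖u τ‖ ^ 2 + ε ^ 2)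
  set B := fun τ ↦ ‖u a‖ + ε + ∫ s in a..τ, g s
  have hf_pos : ∀ t, 0 < f t := fun t ↦ Real.sqrt_pos.2 (by positivity)
  have hnorm_le_f : ∀ t, ‖u t‖ ≤ f t := fun t ↦
    Real.le_sqrt_of_sq_le (le_add_of_nonneg_right (sq_nonneg ε))
  have hfa : f a ≤ B a := by
    have hint : ∫ s in a..a, g s = 0 := intervalIntegral.integral_same
    simp only [f, B, hint, add_zero]
    rw [Real.sqrt_le_left (by positivity)]
    nlinarith [norm_nonneg (u a)]
  have hB : ∀ t, HasDerivAt B (g t) t := fun t ↦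
    ((hg.integral_hasStrictDerivAt a t).hasDerivAt.const_add _)
  have hf_deriv_le : ∀ t ∈ Ico a b, ⟪u t, u' t⟫ / f t ≤ g t := fun t ht ↦ by
    rw [div_le_iff₀ (hf_pos t)]
    calc ⟪u t, u' t⟫ ≤ ‖u t‖ * g t := hbound t ht
      _ ≤ f t * g t := mul_le_mul_of_nonneg_right (hnorm_le_f t) (hg_nonneg t ht)
      _ = g t * f t := mul_comm _ _
  have hfb : f b ≤ B b := image_le_of_deriv_right_le_deriv_boundary
    ((hu.norm.pow 2).add continuousOn_const).sqrt
    (fun t ht ↦ hasDerivWithinAt_sqrt_norm_sq_add_sq (hu' t ht) hε.ne') hfa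
    (fun t _ ↦ (hB t).continuousAt.continuousWithinAt)
    (fun t _ ↦ (hB t).hasDerivWithinAt) hf_deriv_le (right_mem_Icc.2 hab)
  linarith [hnorm_le_f b]

end RealInnerProductSpace

section Schrodinger

variable {H : Type*} [NormedAddCommGroup H] [InnerProductSpace ℂ H] [CompleteSpace H]

theorem IsSelfAdjoint.re_inner_neg_I_smul_apply_self {A : H →L[ℂ] H} (hA : IsSelfAdjoint A)
    (x : H) : re (inner ℂ x ((-I) • A x)) = 0 := by
  have him : im (inner ℂ x (A x)) = 0 := hA.isSymmetric.im_inner_self_apply x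
  simp [inner_smul_right, him]

theorem re_inner_neg_I_smul_apply_add_I_smul_le {A : H →L[ℂ] H} (hA : IsSelfAdjoint A)
    (x y : H) : re (inner ℂ x ((-I) • A x + I • y)) ≤ ‖x‖ * ‖y‖ := by
  calc re (inner ℂ x ((-I) • A x + I • y)) = re (inner ℂ x (I • y)) := by
        rw [inner_add_right, add_re, hA.re_inner_neg_I_smul_apply_self, zero_add]
    _ ≤ ‖x‖ * ‖I • y‖ := re_inner_le_norm (𝕜 := ℂ) _ _
    _ = ‖x‖ * ‖y‖ := by rw [norm_smul, norm_I, one_mul]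

theorem norm_le_norm_of_hasDerivAt_neg_I_smul_selfAdjoint {A : ℝ → H →L[ℂ] H}
    (hA : ∀ t, IsSelfAdjoint (A t)) {u : ℝ → H} {a b : ℝ} (hab : a ≤ b)
    (hu : ∀ t ∈ Icc a b, HasDerivAt u ((-I) • A t (u t)) t) : ‖u b‖ ≤ ‖u a‖ := by
  let _ : InnerProductSpace ℝ H := InnerProductSpace.rclikeToReal ℂ H
  simpa using norm_le_add_integral_of_inner_deriv_le hab
    (fun t ht ↦ (hu t ht).continuousAt.continuousWithinAt)
    (fun t ht ↦ (hu t (Ico_subset_Icc_self ht)).hasDerivWithinAt) continuous_const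
    (fun _ _ ↦ le_rfl)
    fun t _ ↦ ((hA t).re_inner_neg_I_smul_apply_self _).le.trans_eq (mul_zero _).symm

end Schrodinger

theorem dist_final_states_le_integral_opNorm_general
    {H : Type*} [NormedAddCommGroup H] [InnerProductSpace ℂ H] [CompleteSpace H]
    (T : ℝ) (hT : 0 < T)
    (Hop V : ℝ → (H →L[ℂ] H))
    (hVcont : Continuous V)
    (hHsa : ∀ t, IsSelfAdjoint (Hop t)) (hVsa : ∀ t, IsSelfAdjoint (V t))
    (ψ φ : ℝ → H)
    (hψ : ∀ t ∈ Set.Icc (0 : ℝ) T, HasDerivAt ψ ((-Complex.I) • (Hop t) (ψ t)) t)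
    (hφ : ∀ t ∈ Set.Icc (0 : ℝ) T, HasDerivAt φ ((-Complex.I) • ((Hop t + V t) (φ t))) t)
    (h0 : ψ 0 = φ 0) (hnorm : ‖ψ 0‖ = 1) :
    ‖ψ T - φ T‖ ≤ ∫ t in (0 : ℝ)..T, ‖V t‖ := by
  let _ : InnerProductSpace ℝ H := InnerProductSpace.rclikeToReal ℂ H
  have hφ_le : ∀ t ∈ Icc 0 T, ‖φ t‖ ≤ 1 := fun t ht ↦ by
    simpa [← h0, hnorm] using norm_le_norm_of_hasDerivAt_neg_I_smul_selfAdjoint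
      (fun s ↦ (hHsa s).add (hVsa s)) ht.1 (fun s hs ↦ hφ s ⟨hs.1, hs.2.trans ht.2⟩)
  have hδ : ∀ t ∈ Icc 0 T, HasDerivAt (ψ - φ)
      ((-I) • Hop t (ψ t - φ t) + I • V t (φ t)) t := fun t ht ↦ by
    convert (hψ t ht).sub (hφ t ht) using 1
    rw [map_sub, add_apply]
    module
  simpa [h0] using norm_le_add_integral_of_inner_deriv_le hT.le
    (fun t ht ↦ (hδ t ht).continuousAt.continuousWithinAt)
    (fun t ht ↦ (hδ t (Ico_subset_Icc_self ht)).hasDerivWithinAt) hVcont.norm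
    (fun _ _ ↦ norm_nonneg _) fun t ht ↦
      (re_inner_neg_I_smul_apply_add_I_smul_le (hHsa t) _ _).trans <|
        mul_le_mul_of_nonneg_left ((V t).unit_le_opNorm _ (hφ_le t (Ico_subset_Icc_self ht)))
          (norm_nonneg _)

/-- Theorem 1 of the paper: the distance between the final states of the error-free
Schrödinger evolution `ψ` and the evolution `φ` with deterministic analog control
error `V` is bounded by the time integral of the operator norm of `V`. -/
theorem dist_final_states_le_integral_opNorm
    {H : Type*} [NormedAddCommGroup H] [InnerProductSpace ℂ H] [CompleteSpace H]
    (T : ℝ) (hT : 0 < T)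
    (Hop V : ℝ → (H →L[ℂ] H))
    (hHcont : Continuous Hop) (hVcont : Continuous V)
    (hHsa : ∀ t, IsSelfAdjoint (Hop t)) (hVsa : ∀ t, IsSelfAdjoint (V t))
    (ψ φ : ℝ → H)
    (hψ : ∀ t ∈ Set.Icc (0 : ℝ) T, HasDerivAt ψ ((-Complex.I) • (Hop t) (ψ t)) t)
    (hφ : ∀ t ∈ Set.Icc (0 : ℝ) T, HasDerivAt φ ((-Complex.I) • ((Hop t + V t) (φ t))) t)
    (h0 : ψ 0 = φ 0) (hnorm : ‖ψ 0‖ = 1) :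
    ‖ψ T - φ T‖ ≤ ∫ t in (0 : ℝ)..T, ‖V t‖ :=
  dist_final_states_le_integral_opNorm_general T hT Hop V hVcont hHsa hVsa ψ φ hψ hφ h0 hnorm
end

section
/- Let H be a complex Hilbert space, T > 0, and let Ĥ, V̂ : ℝ → (H →L[ℂ] H) be continuous families of bounded self-adjoint operators satisfying ‖V̂(t)‖ < √2 / T for all t ∈ [0,T]. Let ψ, φ : ℝ → H be differentiable with ψ'(t) = -i·Ĥ(t)(ψ(t)) and φ'(t) = -i·(Ĥ(t) + V̂(t))(φ(t)) for all t ∈ [0,T], and suppose ψ(0) = φ(0) with ‖ψ(0)‖ = 1. Then ‖ψ(T) - φ(T)‖ < √2. -/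
/-!
The difference `δ = ψ - φ` solves `δ' = -i Ĥ δ + i V̂ φ`. The skew-adjoint part `-i Ĥ δ` is
orthogonal to `δ`, so `‖δ‖` grows at rate at most `‖V̂ φ‖ ≤ max_{[0,T]} ‖V̂‖` (the same argument
without source term shows `‖φ‖ ≤ 1`). Hence `‖ψ T - φ T‖ ≤ T · max_{[0,T]} ‖V̂‖ < √2`, the maximum
being attained by continuity of `V̂` on the compact interval.
-/

open Set Complex
open scoped InnerProductSpace

-- The fencing theorem needs a strict inequality at contact points, hence `M < K`; keeping the
-- radius `c + K (t - a)` positive lets us compare it with `‖u‖` through squares.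
theorem norm_le_add_mul_of_inner_deriv_le_of_lt {E : Type*} [NormedAddCommGroup E]
    [InnerProductSpace ℝ E] {u u' : ℝ → E} {a b c K M : ℝ} (hc : 0 < c) (hua : ‖u a‖ ≤ c)
    (hK : 0 ≤ K) (hMK : M < K) (hu : ∀ t ∈ Icc a b, HasDerivAt u (u' t) t)
    (hbound : ∀ t ∈ Ico a b, ⟪u t, u' t⟫_ℝ ≤ M * ‖u t‖) :
    ∀ t ∈ Icc a b, ‖u t‖ ≤ c + K * (t - a) := by
  set r : ℝ → ℝ := fun s => c + K * (s - a)
  have hr_pos : ∀ s ∈ Icc a b, 0 < r s := fun s hs => by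
    have := mul_nonneg hK (sub_nonneg.2 hs.1)
    positivity
  have hr_deriv : ∀ s, HasDerivAt (fun s => r s ^ 2) (2 * r s * K) s := fun s => by
    have hr : HasDerivAt r K s :=
      ((((hasDerivAt_id' s).sub_const a).const_mul K).const_add c).congr_deriv (mul_one K)
    simpa using hr.fun_pow 2
  have hsq : ∀ t ∈ Icc a b, ‖u t‖ ^ 2 ≤ r t ^ 2 := by
    refine image_le_of_deriv_right_lt_deriv_boundary
      (fun s hs => (hu s hs).norm_sq.continuousAt.continuousWithinAt)
      (fun s hs => (hu s (Ico_subset_Icc_self hs)).norm_sq.hasDerivWithinAt) ?_ hr_deriv ?_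
    · simp only [r, sub_self, mul_zero, add_zero]
      gcongr
    · intro s hs hcontact
      have hs_pos := hr_pos s (Ico_subset_Icc_self hs)
      have hs_norm : ‖u s‖ = r s := by
        rwa [pow_left_inj₀ (norm_nonneg _) hs_pos.le two_ne_zero] at hcontact
      have := hbound s hs
      rw [hs_norm] at this
      nlinarith
  exact fun t ht =>
    (pow_le_pow_iff_left₀ (norm_nonneg _) (hr_pos t ht).le two_ne_zero).1 (hsq t ht)

theorem norm_le_add_mul_of_inner_deriv_le {E : Type*} [NormedAddCommGroup E]
    [InnerProductSpace ℝ E] {u u' : ℝ → E} {a b M : ℝ} (hM : 0 ≤ M)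
    (hu : ∀ t ∈ Icc a b, HasDerivAt u (u' t) t)
    (hbound : ∀ t ∈ Ico a b, ⟪u t, u' t⟫_ℝ ≤ M * ‖u t‖) :
    ∀ t ∈ Icc a b, ‖u t‖ ≤ ‖u a‖ + M * (t - a) := by
  intro t ht
  refine le_of_forall_pos_le_add fun ε hε => ?_
  have hden : 0 < 1 + (t - a) := by linarith [ht.1]
  set η := ε / (1 + (t - a))
  have hη : 0 < η := div_pos hε hden
  calc ‖u t‖ ≤ (‖u a‖ + η) + (M + η) * (t - a) :=
        norm_le_add_mul_of_inner_deriv_le_of_lt (by positivity) (by linarith) (by linarith)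
          (by linarith) hu hbound t ht
    _ = ‖u a‖ + M * (t - a) + η * (1 + (t - a)) := by ring
    _ = ‖u a‖ + M * (t - a) + ε := by rw [div_mul_cancel₀ _ hden.ne']

theorem LinearMap.IsSymmetric.re_inner_neg_I_smul_apply_self {H : Type*} [NormedAddCommGroup H]
    [InnerProductSpace ℂ H] {A : H →ₗ[ℂ] H} (hA : A.IsSymmetric) (x : H) :
    (⟪x, (-I) • A x⟫_ℂ).re = 0 := by
  simpa [inner_smul_right] using hA.im_inner_self_apply x

theorem norm_le_add_mul_of_hasDerivAt_neg_I_smul_add {H : Type*} [NormedAddCommGroup H]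
    [InnerProductSpace ℂ H] {A : ℝ → H →ₗ[ℂ] H} {u f : ℝ → H} {a b M : ℝ} (hM : 0 ≤ M)
    (hA : ∀ t ∈ Ico a b, (A t).IsSymmetric) (hf : ∀ t ∈ Ico a b, ‖f t‖ ≤ M)
    (hu : ∀ t ∈ Icc a b, HasDerivAt u ((-I) • A t (u t) + f t) t) :
    ∀ t ∈ Icc a b, ‖u t‖ ≤ ‖u a‖ + M * (t - a) := by
  let _ := InnerProductSpace.complexToReal (G := H)
  refine norm_le_add_mul_of_inner_deriv_le hM hu fun t ht => ?_
  calc ⟪u t, (-I) • A t (u t) + f t⟫_ℝ = (⟪u t, f t⟫_ℂ).re := by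
        rw [real_inner_eq_re_inner ℂ, RCLike.re_to_complex, inner_add_right, add_re,
          (hA t ht).re_inner_neg_I_smul_apply_self, zero_add]
    _ ≤ ‖u t‖ * ‖f t‖ := (re_le_norm _).trans (norm_inner_le_norm _ _)
    _ ≤ M * ‖u t‖ := by rw [mul_comm]; gcongr; exact hf t ht

theorem dist_final_states_lt_sqrt_two_general
    {H : Type*} [NormedAddCommGroup H] [InnerProductSpace ℂ H] [CompleteSpace H]
    (T : ℝ) (hT : 0 < T)
    (Hop V : ℝ → (H →L[ℂ] H))
    (hVcont : Continuous V)
    (hHsa : ∀ t, IsSelfAdjoint (Hop t)) (hVsa : ∀ t, IsSelfAdjoint (V t))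
    (hVsmall : ∀ t ∈ Set.Icc (0 : ℝ) T, ‖V t‖ < Real.sqrt 2 / T)
    (ψ φ : ℝ → H)
    (hψ : ∀ t ∈ Set.Icc (0 : ℝ) T, HasDerivAt ψ ((-Complex.I) • (Hop t) (ψ t)) t)
    (hφ : ∀ t ∈ Set.Icc (0 : ℝ) T, HasDerivAt φ ((-Complex.I) • ((Hop t + V t) (φ t))) t)
    (h0 : ψ 0 = φ 0) (hnorm : ‖ψ 0‖ = 1) :
    ‖ψ T - φ T‖ < Real.sqrt 2 := by
  obtain ⟨t₀, ht₀, hmax⟩ := isCompact_Icc.exists_isMaxOn (nonempty_Icc.2 hT.le)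
    hVcont.norm.continuousOn
  have hsym {A : H →L[ℂ] H} (hA : IsSelfAdjoint A) : (A : H →ₗ[ℂ] H).IsSymmetric :=
    ContinuousLinearMap.isSelfAdjoint_iff_isSymmetric.1 hA
  have hφ_le : ∀ t ∈ Icc 0 T, ‖φ t‖ ≤ 1 := by
    have hφ' : ∀ t ∈ Icc 0 T,
        HasDerivAt φ ((-I) • (↑(Hop t + V t) : H →ₗ[ℂ] H) (φ t) + (0 : ℝ → H) t) t := by
      simpa using hφ
    simpa [← h0, hnorm] using norm_le_add_mul_of_hasDerivAt_neg_I_smul_add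
      (A := fun t => ↑(Hop t + V t)) (u := φ) (f := 0) le_rfl
      (fun t _ => hsym ((hHsa t).add (hVsa t))) (fun t _ => by simp) hφ'
  have hVφ : ∀ t ∈ Icc 0 T, ‖I • V t (φ t)‖ ≤ ‖V t₀‖ := fun t ht => by
    rw [norm_smul, norm_I, one_mul]
    simpa using (V t).le_of_opNorm_le_of_le (hmax ht) (hφ_le t ht)
  have hδ : ∀ t ∈ Icc 0 T,
      HasDerivAt (ψ - φ) ((-I) • (Hop t : H →ₗ[ℂ] H) ((ψ - φ) t) + I • V t (φ t)) t :=
    fun t ht => ((hψ t ht).sub (hφ t ht)).congr_deriv <| by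
      simp only [Pi.sub_apply, map_sub, ContinuousLinearMap.coe_coe, add_apply]
      module
  calc ‖ψ T - φ T‖ ≤ ‖(ψ - φ) 0‖ + ‖V t₀‖ * (T - 0) :=
        norm_le_add_mul_of_hasDerivAt_neg_I_smul_add (A := fun t => ↑(Hop t)) (norm_nonneg _)
          (fun t _ => hsym (hHsa t)) (fun t ht => hVφ t (Ico_subset_Icc_self ht)) hδ
          T (right_mem_Icc.2 hT.le)
    _ = ‖V t₀‖ * T := by simp [h0]
    _ < √2 := (lt_div_iff₀ hT).1 (hVsmall t₀ ht₀)

/-- Threshold condition: if the operator norm of the deterministic control error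
satisfies `‖V(t)‖ < √2 / T` on `[0, T]`, then the two final states are strictly
closer than `√2`. -/
theorem dist_final_states_lt_sqrt_two
    {H : Type*} [NormedAddCommGroup H] [InnerProductSpace ℂ H] [CompleteSpace H]
    (T : ℝ) (hT : 0 < T)
    (Hop V : ℝ → (H →L[ℂ] H))
    (hHcont : Continuous Hop) (hVcont : Continuous V)
    (hHsa : ∀ t, IsSelfAdjoint (Hop t)) (hVsa : ∀ t, IsSelfAdjoint (V t))
    (hVsmall : ∀ t ∈ Set.Icc (0 : ℝ) T, ‖V t‖ < Real.sqrt 2 / T)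
    (ψ φ : ℝ → H)
    (hψ : ∀ t ∈ Set.Icc (0 : ℝ) T, HasDerivAt ψ ((-Complex.I) • (Hop t) (ψ t)) t)
    (hφ : ∀ t ∈ Set.Icc (0 : ℝ) T, HasDerivAt φ ((-Complex.I) • ((Hop t + V t) (φ t))) t)
    (h0 : ψ 0 = φ 0) (hnorm : ‖ψ 0‖ = 1) :
    ‖ψ T - φ T‖ < Real.sqrt 2 :=
  dist_final_states_lt_sqrt_two_general T hT Hop V hVcont hHsa hVsa hVsmall ψ φ hψ hφ h0 hnorm
end

section
/- Let H be a complex Hilbert space with a Hilbert basis (eₙ)ₙ indexed by a type ι, let ψ, φ ∈ H be unit vectors, and fix m ∈ ι. Write Cₙ = ⟨eₙ, ψ⟩ and Dₙ = ⟨eₙ, φ⟩, and suppose |C_m|² = 1 - ε² with 0 ≤ ε < 1. Then |⟨ψ, φ⟩| ≤ √(1 - ε²)·|D_m| + ε·√(1 - |D_m|²) ≤ √(1 - ε²)·|D_m| + ε. -/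
/-!
Split `ψ` and `φ` along `e m` and its orthogonal complement. The overlap becomes
`conj C_m * D_m + ⟪ψ⊥, φ⊥⟫`, and Cauchy–Schwarz bounds the second term by
`‖ψ⊥‖ ‖φ⊥‖ = ε √(1 - |D_m|²)`, the norms of the orthogonal parts coming from Pythagoras.
-/

open scoped InnerProductSpace

namespace Submodule

variable {𝕜 E : Type*} [RCLike 𝕜] [NormedAddCommGroup E] [InnerProductSpace 𝕜 E]
  (K : Submodule 𝕜 E) [K.HasOrthogonalProjection]

theorem inner_starProjection_add_inner_starProjection_orthogonal (u v : E) :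
    ⟪K.starProjection u, K.starProjection v⟫_𝕜 + ⟪Kᗮ.starProjection u, Kᗮ.starProjection v⟫_𝕜 =
      ⟪u, v⟫_𝕜 := by
  have hproj_proj : ∀ (L : Submodule 𝕜 E) [L.HasOrthogonalProjection],
      ⟪L.starProjection u, L.starProjection v⟫_𝕜 = ⟪u, L.starProjection v⟫_𝕜 := fun L _ => by
    rw [inner_starProjection_left_eq_right,
      starProjection_eq_self_iff.mpr (L.starProjection_apply_mem v)]
  rw [hproj_proj, hproj_proj, ← inner_add_right, starProjection_add_starProjection_orthogonal]

theorem norm_inner_le_norm_starProjection (u v : E) :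
    ‖⟪u, v⟫_𝕜‖ ≤ ‖K.starProjection u‖ * ‖K.starProjection v‖ +
      ‖Kᗮ.starProjection u‖ * ‖Kᗮ.starProjection v‖ := by
  rw [← K.inner_starProjection_add_inner_starProjection_orthogonal]
  exact (norm_add_le _ _).trans (add_le_add (norm_inner_le_norm _ _) (norm_inner_le_norm _ _))

variable {x : E}

theorem norm_starProjection_orthogonal_unit_singleton (hx : ‖x‖ = 1) (u : E) :
    ‖(𝕜 ∙ x)ᗮ.starProjection u‖ = √(‖u‖ ^ 2 - ‖⟪x, u⟫_𝕜‖ ^ 2) := by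
  rw [norm_sq_eq_add_norm_sq_starProjection u (𝕜 ∙ x), starProjection_unit_singleton 𝕜 hx,
    norm_smul, hx, mul_one, add_sub_cancel_left, Real.sqrt_sq (norm_nonneg _)]

end Submodule

open Submodule in
theorem norm_inner_le_of_norm_eq_one {𝕜 E : Type*} [RCLike 𝕜] [NormedAddCommGroup E]
    [InnerProductSpace 𝕜 E] {x : E} (hx : ‖x‖ = 1) (u v : E) :
    ‖⟪u, v⟫_𝕜‖ ≤ ‖⟪x, u⟫_𝕜‖ * ‖⟪x, v⟫_𝕜‖ +
      √(‖u‖ ^ 2 - ‖⟪x, u⟫_𝕜‖ ^ 2) * √(‖v‖ ^ 2 - ‖⟪x, v⟫_𝕜‖ ^ 2) := by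
  have hproj (w : E) : ‖(𝕜 ∙ x).starProjection w‖ = ‖⟪x, w⟫_𝕜‖ := by
    rw [starProjection_unit_singleton 𝕜 hx, norm_smul, hx, mul_one]
  simpa only [hproj, norm_starProjection_orthogonal_unit_singleton hx] using
    (𝕜 ∙ x).norm_inner_le_norm_starProjection u v

theorem overlap_le_amplitude_bound_general
    {H : Type*} [NormedAddCommGroup H] [InnerProductSpace ℂ H]
    {ι : Type*} (e : HilbertBasis ι ℂ H)
    (ψ φ : H) (hψ : ‖ψ‖ = 1) (hφ : ‖φ‖ = 1)
    (m : ι) (ε : ℝ) (hε0 : 0 ≤ ε)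
    (hCm : ‖(inner ℂ (e m) ψ : ℂ)‖ ^ 2 = 1 - ε ^ 2) :
    ‖(inner ℂ ψ φ : ℂ)‖ ≤
        Real.sqrt (1 - ε ^ 2) * ‖(inner ℂ (e m) φ : ℂ)‖ +
          ε * Real.sqrt (1 - ‖(inner ℂ (e m) φ : ℂ)‖ ^ 2) ∧
      Real.sqrt (1 - ε ^ 2) * ‖(inner ℂ (e m) φ : ℂ)‖ +
          ε * Real.sqrt (1 - ‖(inner ℂ (e m) φ : ℂ)‖ ^ 2) ≤
        Real.sqrt (1 - ε ^ 2) * ‖(inner ℂ (e m) φ : ℂ)‖ + ε := by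
  have hC : ‖(inner ℂ (e m) ψ : ℂ)‖ = √(1 - ε ^ 2) := by
    rw [← hCm, Real.sqrt_sq (norm_nonneg _)]
  have hrest : √(‖ψ‖ ^ 2 - ‖(inner ℂ (e m) ψ : ℂ)‖ ^ 2) = ε := by
    rw [hψ, hCm, one_pow, sub_sub_cancel, Real.sqrt_sq hε0]
  constructor
  · have h := norm_inner_le_of_norm_eq_one (𝕜 := ℂ) (e.orthonormal.1 m) ψ φ
    rwa [hrest, hC, hφ, one_pow] at h
  · gcongr
    exact mul_le_of_le_one_right hε0 (Real.sqrt_le_one.mpr (by simp))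

/-- The chain of inequalities in the proof of Corollary 2: for unit vectors `ψ, φ`
expanded in a Hilbert (measurement) basis `e`, with `|⟨e m, ψ⟩|² = 1 - ε²`,
the overlap satisfies
`|⟨ψ, φ⟩| ≤ √(1 - ε²) |D_m| + ε √(1 - |D_m|²) ≤ √(1 - ε²) |D_m| + ε`. -/
theorem overlap_le_amplitude_bound
    {H : Type*} [NormedAddCommGroup H] [InnerProductSpace ℂ H] [CompleteSpace H]
    {ι : Type*} (e : HilbertBasis ι ℂ H)
    (ψ φ : H) (hψ : ‖ψ‖ = 1) (hφ : ‖φ‖ = 1)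
    (m : ι) (ε : ℝ) (hε0 : 0 ≤ ε) (hε1 : ε < 1)
    (hCm : ‖(inner ℂ (e m) ψ : ℂ)‖ ^ 2 = 1 - ε ^ 2) :
    ‖(inner ℂ ψ φ : ℂ)‖ ≤
        Real.sqrt (1 - ε ^ 2) * ‖(inner ℂ (e m) φ : ℂ)‖ +
          ε * Real.sqrt (1 - ‖(inner ℂ (e m) φ : ℂ)‖ ^ 2) ∧
      Real.sqrt (1 - ε ^ 2) * ‖(inner ℂ (e m) φ : ℂ)‖ +
          ε * Real.sqrt (1 - ‖(inner ℂ (e m) φ : ℂ)‖ ^ 2) ≤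
        Real.sqrt (1 - ε ^ 2) * ‖(inner ℂ (e m) φ : ℂ)‖ + ε :=
  overlap_le_amplitude_bound_general e ψ φ hψ hφ m ε hε0 hCm
end

section
/- Let H be a complex Hilbert space with a Hilbert basis (eₙ)ₙ indexed by a type ι, let ψ, φ ∈ H be unit vectors, fix m ∈ ι, and let v ≥ 0 and 0 ≤ ε < 1 satisfy 1 - v²/2 > ε. Suppose Re⟨ψ, φ⟩ ≥ 1 - v²/2 and |⟨e_m, ψ⟩|² = 1 - ε². Then |⟨e_m, φ⟩| ≥ (1 - v²/2 - ε) / √(1 - ε²) > 0. -/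
/-!
Split both states along `e m`: `ψ = C_m e_m + ψ'` and `φ = D_m e_m + φ'` with `ψ', φ' ⊥ e_m`.
Then `⟨ψ, φ⟩ = conj C_m · D_m + ⟨ψ', φ'⟩`, and since `‖ψ'‖² = 1 - |C_m|² = ε²` and `‖φ'‖ ≤ 1`,
Cauchy–Schwarz gives `1 - v²/2 ≤ Re ⟨ψ, φ⟩ ≤ √(1 - ε²) |D_m| + ε`.
-/

open RCLike ComplexConjugate

section UnitVector

variable {𝕜 E : Type*} [RCLike 𝕜] [NormedAddCommGroup E] [InnerProductSpace 𝕜 E]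
  {u : E}

local notation "⟪" x ", " y "⟫" => inner 𝕜 x y

lemma inner_sub_smul_sub_smul_of_norm_eq_one (hu : ‖u‖ = 1) (x y : E) :
    ⟪x - ⟪u, x⟫ • u, y - ⟪u, y⟫ • u⟫ = ⟪x, y⟫ - conj ⟪u, x⟫ * ⟪u, y⟫ := by
  have huu : ⟪u, u⟫ = 1 := by simp [inner_self_eq_norm_sq_to_K, hu]
  simp only [inner_sub_left, inner_sub_right, inner_smul_left, inner_smul_right, huu,
    inner_conj_symm]
  ring

lemma norm_sub_smul_sq_of_norm_eq_one (hu : ‖u‖ = 1) (x : E) :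
    ‖x - ⟪u, x⟫ • u‖ ^ 2 = ‖x‖ ^ 2 - ‖⟪u, x⟫‖ ^ 2 := by
  have h := congrArg (re : 𝕜 → ℝ) (inner_sub_smul_sub_smul_of_norm_eq_one hu x x)
  simpa only [inner_self_eq_norm_sq, map_sub, RCLike.conj_mul, ← ofReal_pow, ofReal_re] using h

lemma re_inner_le_of_norm_eq_one (hu : ‖u‖ = 1) (x y : E) :
    re ⟪x, y⟫ ≤ ‖⟪u, x⟫‖ * ‖⟪u, y⟫‖ + ‖x - ⟪u, x⟫ • u‖ * ‖y - ⟪u, y⟫ • u‖ := by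
  have hsplit : ⟪x, y⟫ = conj ⟪u, x⟫ * ⟪u, y⟫ + ⟪x - ⟪u, x⟫ • u, y - ⟪u, y⟫ • u⟫ := by
    rw [inner_sub_smul_sub_smul_of_norm_eq_one hu]; ring
  calc re ⟪x, y⟫ ≤ ‖⟪x, y⟫‖ := re_le_norm _
    _ ≤ ‖conj ⟪u, x⟫ * ⟪u, y⟫‖ + ‖⟪x - ⟪u, x⟫ • u, y - ⟪u, y⟫ • u⟫‖ := hsplit ▸ norm_add_le _ _
    _ ≤ _ := by
      rw [norm_mul, norm_conj]
      gcongr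
      exact norm_inner_le_norm _ _

end UnitVector

theorem amplitude_lower_bound_general
    {H : Type*} [NormedAddCommGroup H] [InnerProductSpace ℂ H]
    {ι : Type*} (e : HilbertBasis ι ℂ H)
    (ψ φ : H) (hψ : ‖ψ‖ = 1) (hφ : ‖φ‖ = 1)
    (m : ι) (v ε : ℝ) (hε0 : 0 ≤ ε)
    (hthreshold : 1 - v ^ 2 / 2 > ε)
    (hoverlap : (inner ℂ ψ φ : ℂ).re ≥ 1 - v ^ 2 / 2)
    (hCm : ‖(inner ℂ (e m) ψ : ℂ)‖ ^ 2 = 1 - ε ^ 2) :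
    ‖(inner ℂ (e m) φ : ℂ)‖ ≥ (1 - v ^ 2 / 2 - ε) / Real.sqrt (1 - ε ^ 2) ∧
      (1 - v ^ 2 / 2 - ε) / Real.sqrt (1 - ε ^ 2) > 0 := by
  have hem : ‖e m‖ = 1 := e.orthonormal.1 m
  have hψ' : ‖ψ - (inner ℂ (e m) ψ : ℂ) • e m‖ = ε := by
    rw [← sq_eq_sq₀ (norm_nonneg _) hε0, norm_sub_smul_sq_of_norm_eq_one hem, hψ, hCm]
    ring
  have hφ' : ‖φ - (inner ℂ (e m) φ : ℂ) • e m‖ ≤ 1 := by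
    rw [← sq_le_one_iff₀ (norm_nonneg _), norm_sub_smul_sq_of_norm_eq_one hem, hφ]
    nlinarith [norm_nonneg (inner ℂ (e m) φ : ℂ)]
  have hCm' : ‖(inner ℂ (e m) ψ : ℂ)‖ = Real.sqrt (1 - ε ^ 2) := by
    rw [← hCm, Real.sqrt_sq (norm_nonneg _)]
  have hre := re_inner_le_of_norm_eq_one (𝕜 := ℂ) hem ψ φ
  rw [hCm', hψ', RCLike.re_to_complex] at hre
  have hsqrt : 0 < Real.sqrt (1 - ε ^ 2) := Real.sqrt_pos.2 (by nlinarith [sq_nonneg v])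
  refine ⟨?_, div_pos (by linarith) hsqrt⟩
  rw [ge_iff_le, div_le_iff₀ hsqrt]
  linarith [mul_le_of_le_one_right hε0 hφ', mul_comm ‖(inner ℂ (e m) φ : ℂ)‖ √(1 - ε ^ 2)]

/-- Abstract content of Corollary 2: if the unit vectors `ψ` (error-free final
state) and `φ` (final state with control errors) satisfy
`Re ⟨ψ, φ⟩ ≥ 1 - v²/2` and the target amplitude satisfies `|⟨e m, ψ⟩|² = 1 - ε²`
with `1 - v²/2 > ε`, then the erroneous amplitude `|⟨e m, φ⟩|` is bounded below
by the positive quantity `(1 - v²/2 - ε)/√(1 - ε²)`. -/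
theorem amplitude_lower_bound
    {H : Type*} [NormedAddCommGroup H] [InnerProductSpace ℂ H] [CompleteSpace H]
    {ι : Type*} (e : HilbertBasis ι ℂ H)
    (ψ φ : H) (hψ : ‖ψ‖ = 1) (hφ : ‖φ‖ = 1)
    (m : ι) (v ε : ℝ) (hv0 : 0 ≤ v) (hε0 : 0 ≤ ε) (hε1 : ε < 1)
    (hthreshold : 1 - v ^ 2 / 2 > ε)
    (hoverlap : (inner ℂ ψ φ : ℂ).re ≥ 1 - v ^ 2 / 2)
    (hCm : ‖(inner ℂ (e m) ψ : ℂ)‖ ^ 2 = 1 - ε ^ 2) :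
    ‖(inner ℂ (e m) φ : ℂ)‖ ≥ (1 - v ^ 2 / 2 - ε) / Real.sqrt (1 - ε ^ 2) ∧
      (1 - v ^ 2 / 2 - ε) / Real.sqrt (1 - ε ^ 2) > 0 :=
  amplitude_lower_bound_general e ψ φ hψ hφ m v ε hε0 hthreshold hoverlap hCm
end

section
/- Let H be a complex Hilbert space with a Hilbert basis (eₙ)ₙ indexed by a type ι, let T > 0, and let Ĥ, V̂ : ℝ → (H →L[ℂ] H) be continuous families of bounded self-adjoint operators with v := ∫₀^T ‖V̂(t)‖ dt. Let ψ, φ : ℝ → H be differentiable with ψ'(t) = -i·Ĥ(t)(ψ(t)) and φ'(t) = -i·(Ĥ(t) + V̂(t))(φ(t)) for all t ∈ [0,T], and suppose ψ(0) = φ(0) with ‖ψ(0)‖ = 1. Fix m ∈ ι and 0 ≤ ε < 1 with |⟨e_m, ψ(T)⟩|² = 1 - ε². If 1 - v²/2 > ε, then |⟨e_m, φ(T)⟩| ≥ (1 - v²/2 - ε)/√(1 - ε²) > 0. -/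
/-!
Since `-iĤ(t)` is skew-adjoint, both evolutions preserve the norm, and only the error term
`iV̂(t)φ(t)` can change `‖ψ(t) - φ(t)‖`; hence `‖ψ(T) - φ(T)‖ ≤ v`, i.e.
`Re⟪ψ(T), φ(T)⟫ ≥ 1 - v²/2`. Splitting `ψ(T)` into its component along `e_m`, of length
`√(1 - ε²)`, and a remainder of length `ε` then gives
`1 - v²/2 ≤ √(1 - ε²) |⟪e_m, φ(T)⟫| + ε`.
-/

open Set

section Radial

open RCLike

variable {𝕜 E : Type*} [RCLike 𝕜] [NormedAddCommGroup E] [InnerProductSpace 𝕜 E]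
  [NormedSpace ℝ E]

local notation "⟪" x ", " y "⟫" => inner 𝕜 x y

variable (𝕜) in
theorem HasDerivAt.norm_sq_of_rclike {f : ℝ → E} {f' : E} {t : ℝ}
    (hf : HasDerivAt f f' t) : HasDerivAt (‖f ·‖ ^ 2) (2 * re ⟪f t, f'⟫) t := by
  have h := reCLM.hasFDerivAt.comp_hasDerivAt t (hf.inner 𝕜 hf)
  have hre : re (⟪f t, f'⟫ + ⟪f', f t⟫) = 2 * re ⟪f t, f'⟫ := by
    rw [map_add, inner_re_symm (𝕜 := 𝕜) f' (f t)]
    ring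
  simpa only [Function.comp_def, reCLM_apply, ← norm_sq_eq_re_inner (𝕜 := 𝕜), hre] using h

variable {f f' : ℝ → E} {a b : ℝ}

theorem norm_eq_of_re_inner_deriv_eq_zero (hf : ∀ t ∈ Icc a b, HasDerivAt f (f' t) t)
    (h : ∀ t ∈ Icc a b, re ⟪f t, f' t⟫ = 0) : ∀ t ∈ Icc a b, ‖f t‖ = ‖f a‖ := by
  have hsq : ∀ t ∈ Icc a b, ‖f t‖ ^ 2 = ‖f a‖ ^ 2 := by
    refine constant_of_has_deriv_right_zero
      (fun t ht => ((hf t ht).norm_sq_of_rclike 𝕜).continuousAt.continuousWithinAt) fun t ht => ?_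
    simpa [h t (Ico_subset_Icc_self ht)] using
      ((hf t (Ico_subset_Icc_self ht)).norm_sq_of_rclike 𝕜).hasDerivWithinAt
  exact fun t ht => (pow_left_inj₀ (norm_nonneg _) (norm_nonneg _) two_ne_zero).1 (hsq t ht)

theorem norm_le_add_integral_of_re_inner_deriv_le {k : ℝ → ℝ} (hab : a ≤ b)
    (hf : ∀ t ∈ Icc a b, HasDerivAt f (f' t) t) (hk : Continuous k) (hk₀ : ∀ t, 0 ≤ k t)
    (h : ∀ t ∈ Icc a b, re ⟪f t, f' t⟫ ≤ ‖f t‖ * k t) :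
    ‖f b‖ ≤ ‖f a‖ + ∫ t in a..b, k t := by
  refine le_of_forall_pos_le_add fun η hη => ?_
  -- `‖f‖` need not be differentiable where `f` vanishes; its smoothing `√(‖f‖² + η²)` is.
  set g : ℝ → ℝ := fun t => √(‖f t‖ ^ 2 + η ^ 2)
  have hg_pos : ∀ t, 0 < ‖f t‖ ^ 2 + η ^ 2 := fun t => by positivity
  have hg : ∀ t ∈ Icc a b, HasDerivAt g (re ⟪f t, f' t⟫ / g t) t := fun t ht => by
    convert (((hf t ht).norm_sq_of_rclike 𝕜).add_const (η ^ 2)).sqrt (hg_pos t).ne' using 1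
    simp only [g]
    field_simp
  have hg_le : ∀ t ∈ Icc a b, re ⟪f t, f' t⟫ / g t ≤ k t := fun t ht => by
    have hnorm_le : ‖f t‖ ≤ g t := Real.le_sqrt_of_sq_le (by linarith [sq_nonneg η])
    rw [div_le_iff₀ (Real.sqrt_pos.2 (hg_pos t))]
    exact (h t ht).trans (by nlinarith [hk₀ t])
  have hB : ∀ x, HasDerivAt (fun x => g a + ∫ t in a..x, k t) (k x) x := fun x =>
    ((hk.integral_hasStrictDerivAt a x).hasDerivAt).const_add _
  have hgb : g b ≤ g a + ∫ t in a..b, k t :=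
    image_le_of_deriv_right_le_deriv_boundary
      (fun t ht => (hg t ht).continuousAt.continuousWithinAt)
      (fun t ht => (hg t (Ico_subset_Icc_self ht)).hasDerivWithinAt) (by simp)
      (fun x _ => (hB x).continuousAt.continuousWithinAt) (fun x _ => (hB x).hasDerivWithinAt)
      (fun t ht => hg_le t (Ico_subset_Icc_self ht)) (right_mem_Icc.2 hab)
  have hga : g a ≤ ‖f a‖ + η :=
    Real.sqrt_le_iff.2 ⟨by positivity, by nlinarith [norm_nonneg (f a)]⟩
  have hfb : ‖f b‖ ≤ g b := Real.le_sqrt_of_sq_le (by linarith [sq_nonneg η])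
  linarith

end Radial

section Amplitude

open RCLike ComplexConjugate

variable {𝕜 E : Type*} [RCLike 𝕜] [NormedAddCommGroup E] [InnerProductSpace 𝕜 E]

local notation "⟪" x ", " y "⟫" => inner 𝕜 x y

theorem re_inner_eq_one_sub_norm_sub_sq_div_two {x y : E} (hx : ‖x‖ = 1) (hy : ‖y‖ = 1) :
    re ⟪x, y⟫ = 1 - ‖x - y‖ ^ 2 / 2 := by
  rw [norm_sub_sq (𝕜 := 𝕜), hx, hy]
  ring

variable (𝕜) in
theorem norm_sub_inner_smul_sq {e : E} (he : ‖e‖ = 1) (x : E) :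
    ‖x - ⟪e, x⟫ • e‖ ^ 2 = ‖x‖ ^ 2 - ‖⟪e, x⟫‖ ^ 2 := by
  have h : re ⟪x, ⟪e, x⟫ • e⟫ = ‖⟪e, x⟫‖ ^ 2 := by
    rw [inner_smul_right, ← inner_conj_symm x e, mul_conj, ← ofReal_pow, ofReal_re]
  rw [norm_sub_sq (𝕜 := 𝕜), h, norm_smul, he, mul_one]
  ring

variable (𝕜) in
theorem norm_inner_le_norm_inner_mul_add (e x y : E) :
    ‖⟪x, y⟫‖ ≤ ‖⟪e, x⟫‖ * ‖⟪e, y⟫‖ + ‖x - ⟪e, x⟫ • e‖ * ‖y‖ := by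
  have hsplit : ⟪x, y⟫ = conj ⟪e, x⟫ * ⟪e, y⟫ + ⟪x - ⟪e, x⟫ • e, y⟫ := by
    rw [inner_sub_left, inner_smul_left]
    ring
  rw [hsplit]
  refine (norm_add_le _ _).trans (add_le_add ?_ (norm_inner_le_norm _ _))
  rw [norm_mul, RCLike.norm_conj]

end Amplitude

section Schrodinger

open Complex

variable {H : Type*} [NormedAddCommGroup H] [InnerProductSpace ℂ H] [CompleteSpace H]

theorem IsSelfAdjoint.re_inner_neg_I_smul_apply {A : H →L[ℂ] H} (hA : IsSelfAdjoint A) (x : H) :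
    RCLike.re (inner ℂ x ((-I) • A x)) = 0 := by
  have him := hA.isSymmetric.im_inner_self_apply x
  rw [inner_smul_right]
  simp_all

variable {a b : ℝ}

theorem norm_eq_of_schrodinger {A : ℝ → H →L[ℂ] H} (hA : ∀ t, IsSelfAdjoint (A t)) {χ : ℝ → H}
    (hχ : ∀ t ∈ Icc a b, HasDerivAt χ ((-I) • A t (χ t)) t) :
    ∀ t ∈ Icc a b, ‖χ t‖ = ‖χ a‖ :=
  norm_eq_of_re_inner_deriv_eq_zero hχ fun t _ => (hA t).re_inner_neg_I_smul_apply (χ t)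

theorem norm_sub_le_of_schrodinger {Hop V : ℝ → H →L[ℂ] H} (hH : ∀ t, IsSelfAdjoint (Hop t))
    (hV : ∀ t, IsSelfAdjoint (V t)) (hVc : Continuous V) (hab : a ≤ b) {ψ φ : ℝ → H}
    (hψ : ∀ t ∈ Icc a b, HasDerivAt ψ ((-I) • Hop t (ψ t)) t)
    (hφ : ∀ t ∈ Icc a b, HasDerivAt φ ((-I) • (Hop t + V t) (φ t)) t) :
    ‖ψ b - φ b‖ ≤ ‖ψ a - φ a‖ + ‖φ a‖ * ∫ t in a..b, ‖V t‖ := by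
  have hφ_norm := norm_eq_of_schrodinger (fun t => (hH t).add (hV t)) hφ
  rw [← intervalIntegral.integral_const_mul]
  refine norm_le_add_integral_of_re_inner_deriv_le (𝕜 := ℂ) hab
    (fun t ht => (hψ t ht).sub (hφ t ht)) (continuous_const.mul hVc.norm)
    (fun t => by positivity) fun t ht => ?_
  have hderiv : (-I) • Hop t (ψ t) - (-I) • (Hop t + V t) (φ t) =
      (-I) • Hop t (ψ t - φ t) + I • V t (φ t) := by
    simp only [map_sub, add_apply]
    module
  rw [Pi.sub_apply, hderiv, inner_add_right, RCLike.re.map_add,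
    (hH t).re_inner_neg_I_smul_apply, zero_add]
  refine (re_inner_le_norm _ _).trans (mul_le_mul_of_nonneg_left ?_ (norm_nonneg _))
  rw [norm_smul, norm_I, one_mul, ← hφ_norm t ht, mul_comm]
  exact (V t).le_opNorm _

end Schrodinger

theorem threshold_theorem_quantum_annealing_general
    {H : Type*} [NormedAddCommGroup H] [InnerProductSpace ℂ H] [CompleteSpace H]
    {ι : Type*} (e : HilbertBasis ι ℂ H)
    (T : ℝ) (hT : 0 < T)
    (Hop V : ℝ → (H →L[ℂ] H))
    (hVcont : Continuous V)
    (hHsa : ∀ t, IsSelfAdjoint (Hop t)) (hVsa : ∀ t, IsSelfAdjoint (V t))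
    (v : ℝ) (hv : v = ∫ t in (0 : ℝ)..T, ‖V t‖)
    (ψ φ : ℝ → H)
    (hψ : ∀ t ∈ Set.Icc (0 : ℝ) T, HasDerivAt ψ ((-Complex.I) • (Hop t) (ψ t)) t)
    (hφ : ∀ t ∈ Set.Icc (0 : ℝ) T, HasDerivAt φ ((-Complex.I) • ((Hop t + V t) (φ t))) t)
    (h0 : ψ 0 = φ 0) (hnorm : ‖ψ 0‖ = 1)
    (m : ι) (ε : ℝ) (hε0 : 0 ≤ ε) (hε1 : ε < 1)
    (hCm : ‖(inner ℂ (e m) (ψ T) : ℂ)‖ ^ 2 = 1 - ε ^ 2)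
    (hthreshold : 1 - v ^ 2 / 2 > ε) :
    ‖(inner ℂ (e m) (φ T) : ℂ)‖ ≥ (1 - v ^ 2 / 2 - ε) / Real.sqrt (1 - ε ^ 2) ∧
      (1 - v ^ 2 / 2 - ε) / Real.sqrt (1 - ε ^ 2) > 0 := by
  have hTmem : T ∈ Icc 0 T := right_mem_Icc.2 hT.le
  have hψT : ‖ψ T‖ = 1 := (norm_eq_of_schrodinger hHsa hψ T hTmem).trans hnorm
  have hφT : ‖φ T‖ = 1 := by
    rw [norm_eq_of_schrodinger (fun t => (hHsa t).add (hVsa t)) hφ T hTmem, ← h0, hnorm]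
  have hdiff : ‖ψ T - φ T‖ ≤ v := by
    have h := norm_sub_le_of_schrodinger hHsa hVsa hVcont hT.le hψ hφ
    rwa [h0, sub_self, norm_zero, zero_add, ← h0, hnorm, one_mul, ← hv] at h
  have hc : ‖inner ℂ (e m) (ψ T)‖ = √(1 - ε ^ 2) := by
    rw [← hCm, Real.sqrt_sq (norm_nonneg _)]
  have hres : ‖ψ T - inner ℂ (e m) (ψ T) • e m‖ = ε := by
    rw [← sq_eq_sq₀ (norm_nonneg _) hε0, norm_sub_inner_smul_sq ℂ (e.orthonormal.1 m), hψT, hCm]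
    ring
  have hpos : 0 < √(1 - ε ^ 2) := Real.sqrt_pos.2 (by nlinarith)
  have hkey : 1 - v ^ 2 / 2 - ε ≤ √(1 - ε ^ 2) * ‖inner ℂ (e m) (φ T)‖ := by
    have hfid : 1 - v ^ 2 / 2 ≤ RCLike.re (inner ℂ (ψ T) (φ T)) := by
      rw [re_inner_eq_one_sub_norm_sub_sq_div_two hψT hφT]
      gcongr
    have hsplit := norm_inner_le_norm_inner_mul_add ℂ (e m) (ψ T) (φ T)
    rw [hc, hres, hφT, mul_one] at hsplit
    linarith [RCLike.re_le_norm (inner ℂ (ψ T) (φ T))]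
  exact ⟨(div_le_iff₀' hpos).2 hkey, div_pos (by linarith) hpos⟩

/-- Corollary 2 combined with Theorem 1: under the threshold condition
`1 - v²/2 > ε`, where `v = ∫₀ᵀ ‖V(t)‖ dt` is the integrated error strength, the
amplitude of the target measurement outcome `e m` in the erroneous final state
`φ(T)` is bounded below by the positive quantity `(1 - v²/2 - ε)/√(1 - ε²)`,
independently of the computation time `T`. -/
theorem threshold_theorem_quantum_annealing
    {H : Type*} [NormedAddCommGroup H] [InnerProductSpace ℂ H] [CompleteSpace H]
    {ι : Type*} (e : HilbertBasis ι ℂ H)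
    (T : ℝ) (hT : 0 < T)
    (Hop V : ℝ → (H →L[ℂ] H))
    (hHcont : Continuous Hop) (hVcont : Continuous V)
    (hHsa : ∀ t, IsSelfAdjoint (Hop t)) (hVsa : ∀ t, IsSelfAdjoint (V t))
    (v : ℝ) (hv : v = ∫ t in (0 : ℝ)..T, ‖V t‖)
    (ψ φ : ℝ → H)
    (hψ : ∀ t ∈ Set.Icc (0 : ℝ) T, HasDerivAt ψ ((-Complex.I) • (Hop t) (ψ t)) t)
    (hφ : ∀ t ∈ Set.Icc (0 : ℝ) T, HasDerivAt φ ((-Complex.I) • ((Hop t + V t) (φ t))) t)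
    (h0 : ψ 0 = φ 0) (hnorm : ‖ψ 0‖ = 1)
    (m : ι) (ε : ℝ) (hε0 : 0 ≤ ε) (hε1 : ε < 1)
    (hCm : ‖(inner ℂ (e m) (ψ T) : ℂ)‖ ^ 2 = 1 - ε ^ 2)
    (hthreshold : 1 - v ^ 2 / 2 > ε) :
    ‖(inner ℂ (e m) (φ T) : ℂ)‖ ≥ (1 - v ^ 2 / 2 - ε) / Real.sqrt (1 - ε ^ 2) ∧
      (1 - v ^ 2 / 2 - ε) / Real.sqrt (1 - ε ^ 2) > 0 :=
  threshold_theorem_quantum_annealing_general e T hT Hop V hVcont hHsa hVsa v hv ψ φ hψ hφ h0 hnorm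
    m ε hε0 hε1 hCm hthreshold
end
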